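/- arXiv:2209.15596 — 7 statements merged into one kernel-verified Lean document; each statement's English description precedes it below -/
import Mathlib

section
/- Let P and Q be probability measures on a measurable space admitting densities p and q with respect to a common σ-finite measure ν, with q > 0 ν-almost everywhere, and let L_{P/Q}(t) := log(p(t)/q(t)). Then for every ε ∈ ℝ, H_{e^ε}(P‖Q) = ∫ max(1 − e^{ε − L_{P/Q}(t)}, 0) dP(t) = ∫ max(1 − e^{ε − s}, 0) d(P.map L_{P/Q})(s), i.e. the hockey-stick divergence at threshold e^ε equals the expectation of [1 − e^{ε − s}]_+ where s is distributed according to the privacy loss random variable (the pushforward of P under L_{P/Q}). -/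
open MeasureTheory ProbabilityTheory Real

/-- Hockey-stick divergence `H_α(P‖Q) = sup_E (P(E) − α·Q(E))`. -/
noncomputable def hockeyStick {Ω : Type*} [MeasurableSpace Ω] (α : ℝ) (P Q : Measure Ω) : ℝ :=
  ⨆ E : {E : Set Ω // MeasurableSet E}, ((P E).toReal - α * (Q E).toReal)

/-- The hockey-stick divergence at threshold `e^ε` equals the expectation of
`[1 − e^{ε − L_{P/Q}}]_+` under `P`, and also the corresponding expectation with respect
to the privacy loss random variable (the pushforward of `P` under `L_{P/Q}`). -/
theorem hockeyStick_eq_expectation_plrv {Ω : Type*} [MeasurableSpace Ω]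
    (ν : Measure Ω) [SigmaFinite ν]
    (p q : Ω → ℝ) (hp : Measurable p) (hq : Measurable q)
    (hp0 : ∀ t, 0 ≤ p t) (hq0 : ∀ t, 0 ≤ q t)
    (hqpos : ∀ᵐ t ∂ν, 0 < q t)
    (P Q : Measure Ω)
    (hP : P = ν.withDensity (fun t => ENNReal.ofReal (p t)))
    (hQ : Q = ν.withDensity (fun t => ENNReal.ofReal (q t)))
    [IsProbabilityMeasure P] [IsProbabilityMeasure Q]
    (ε : ℝ) :
    hockeyStick (exp ε) P Q
        = ∫ t, max (1 - exp (ε - log (p t / q t))) 0 ∂P ∧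
    hockeyStick (exp ε) P Q
        = ∫ s, max (1 - exp (ε - s)) 0 ∂(P.map (fun t => log (p t / q t))) := by
  set α := exp ε with hα
  have hα0 : 0 < α := exp_pos ε
  -- integrability of p and q
  have hPlin : ∫⁻ t, ENNReal.ofReal (p t) ∂ν = 1 := by
    have h := measure_univ (μ := P)
    rw [hP, withDensity_apply _ MeasurableSet.univ, setLIntegral_univ] at h
    exact h
  have hQlin : ∫⁻ t, ENNReal.ofReal (q t) ∂ν = 1 := by
    have h := measure_univ (μ := Q)
    rw [hQ, withDensity_apply _ MeasurableSet.univ, setLIntegral_univ] at h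
    exact h
  have hpInt : Integrable p ν := by
    have h := integrable_toReal_of_lintegral_ne_top hp.ennreal_ofReal.aemeasurable
      (by rw [hPlin]; exact ENNReal.one_ne_top)
    exact h.congr (Filter.Eventually.of_forall fun t => ENNReal.toReal_ofReal (hp0 t))
  have hqInt : Integrable q ν := by
    have h := integrable_toReal_of_lintegral_ne_top hq.ennreal_ofReal.aemeasurable
      (by rw [hQlin]; exact ENNReal.one_ne_top)
    exact h.congr (Filter.Eventually.of_forall fun t => ENNReal.toReal_ofReal (hq0 t))
  have hsubInt : Integrable (fun t => p t - α * q t) ν := hpInt.sub (hqInt.const_mul α)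
  have hmaxInt : Integrable (fun t => max (p t - α * q t) 0) ν := hsubInt.pos_part
  set M := ∫ t, max (p t - α * q t) 0 ∂ν with hM
  -- (P E).toReal = ∫ t in E, p t ∂ν
  have hPE : ∀ E : Set Ω, MeasurableSet E → (P E).toReal = ∫ t in E, p t ∂ν := by
    intro E hE
    rw [hP, withDensity_apply _ hE,
      ← ofReal_integral_eq_lintegral_ofReal hpInt.restrict
        (Filter.Eventually.of_forall hp0),
      ENNReal.toReal_ofReal (integral_nonneg hp0)]
  have hQE : ∀ E : Set Ω, MeasurableSet E → (Q E).toReal = ∫ t in E, q t ∂ν := by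
    intro E hE
    rw [hQ, withDensity_apply _ hE,
      ← ofReal_integral_eq_lintegral_ofReal hqInt.restrict
        (Filter.Eventually.of_forall hq0),
      ENNReal.toReal_ofReal (integral_nonneg hq0)]
  have hdiff : ∀ E : Set Ω, MeasurableSet E →
      (P E).toReal - α * (Q E).toReal = ∫ t in E, (p t - α * q t) ∂ν := by
    intro E hE
    rw [hPE E hE, hQE E hE, integral_sub hpInt.restrict ((hqInt.const_mul α).restrict),
      integral_const_mul]
  have hbound : ∀ E : Set Ω, MeasurableSet E →
      (P E).toReal - α * (Q E).toReal ≤ M := by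
    intro E hE
    rw [hdiff E hE]
    calc ∫ t in E, (p t - α * q t) ∂ν
        ≤ ∫ t in E, max (p t - α * q t) 0 ∂ν :=
          integral_mono hsubInt.restrict hmaxInt.restrict fun t => le_max_left _ _
      _ ≤ M := setIntegral_le_integral hmaxInt
          (Filter.Eventually.of_forall fun t => le_max_right _ _)
  have hEstar : MeasurableSet {t | α * q t < p t} := measurableSet_lt (hq.const_mul α) hp
  have hattain : (P {t | α * q t < p t}).toReal - α * (Q {t | α * q t < p t}).toReal = M := by
    rw [hdiff _ hEstar, hM, ← integral_indicator hEstar]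
    refine integral_congr_ae (Filter.Eventually.of_forall fun t => ?_)
    by_cases ht : α * q t < p t
    · rw [Set.indicator_of_mem (show t ∈ {t | α * q t < p t} from ht)]
      exact (max_eq_left (le_of_lt (sub_pos.mpr ht))).symm
    · rw [Set.indicator_of_notMem (show t ∉ {t | α * q t < p t} from ht)]
      exact (max_eq_right (sub_nonpos.mpr (not_lt.mp ht))).symm
  have hHS : hockeyStick α P Q = M := by
    unfold hockeyStick
    apply le_antisymm
    · exact ciSup_le fun E => hbound E.1 E.2
    · have hbdd : BddAbove (Set.range fun E : {E : Set Ω // MeasurableSet E} =>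
          ((P E).toReal - α * (Q E).toReal)) := by
        refine ⟨M, ?_⟩
        rintro x ⟨E, rfl⟩
        exact hbound E.1 E.2
      exact hattain ▸ le_ciSup hbdd (⟨{t | α * q t < p t}, hEstar⟩ :
        {E : Set Ω // MeasurableSet E})
  have hPexp : ∫ t, max (1 - exp (ε - log (p t / q t))) 0 ∂P = M := by
    rw [hP]
    simp only [ENNReal.ofReal]
    rw [integral_withDensity_eq_integral_smul hp.real_toNNReal]
    refine integral_congr_ae ?_
    filter_upwards [hqpos] with t hqt
    rw [NNReal.smul_def, smul_eq_mul, Real.coe_toNNReal _ (hp0 t)]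
    rcases eq_or_lt_of_le (hp0 t) with hpt | hppos
    · rw [← hpt, zero_mul]
      exact (max_eq_right (sub_nonpos.mpr (le_of_lt (mul_pos hα0 hqt)))).symm
    · have hdivpos : 0 < p t / q t := div_pos hppos hqt
      rw [exp_sub, exp_log hdivpos]
      have h1 : exp ε / (p t / q t) = α * q t / p t := by
        rw [← hα]; field_simp
      rw [h1, mul_max_of_nonneg _ _ (le_of_lt hppos), mul_zero]
      congr 1
      field_simp
  refine ⟨by rw [hHS, hPexp], ?_⟩
  have hLmeas : Measurable fun t => log (p t / q t) := measurable_log.comp (hp.div hq)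
  have hfcont : Continuous fun s : ℝ => max (1 - exp (ε - s)) 0 := by
    apply Continuous.max _ continuous_const
    exact continuous_const.sub ((continuous_const.sub continuous_id).rexp)
  rw [integral_map hLmeas.aemeasurable hfcont.aestronglyMeasurable, hHS, ← hPexp]
end

section
/- Let (P, Q) and (P', Q') be two pairs of probability measures, each pair admitting densities (p, q) and (p', q') with respect to common σ-finite measures, with q > 0 and q' > 0 almost everywhere. Then: (i) for (P ⊗ P')-almost every (t, s), the privacy loss function of the product pair satisfies L_{(P×P')/(Q×Q')}(t, s) = L_{P/Q}(t) + L_{P'/Q'}(s); and (ii) the pushforward of the product measure P ⊗ P' under the map (t, s) ↦ L_{P/Q}(t) + L_{P'/Q'}(s) equals the convolution of the pushforward of P under L_{P/Q} with the pushforward of P' under L_{P'/Q'}. In other words, the privacy loss random variable of the product pair (P × P', Q × Q') is the independent sum of the privacy loss random variables of (P, Q) and (P', Q'). -/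
/-!
Under `P` the density `p` is a.e. positive, and `q > 0` holds `ν`-a.e., hence `P`-a.e. since
`P ≪ ν`; so both likelihood ratios are positive almost everywhere on the product and the logarithm
splits. The second claim is `map_prod_map` followed by the definition of convolution.
-/

open MeasureTheory ProbabilityTheory Real

namespace MeasureTheory

theorem ae_withDensity_ofReal_pos {α : Type*} [MeasurableSpace α] {μ : Measure α} {f : α → ℝ}
    (hf : Measurable f) : ∀ᵐ x ∂μ.withDensity (fun x => ENNReal.ofReal (f x)), 0 < f x :=
  (ae_withDensity_iff hf.ennreal_ofReal).2 (ae_of_all _ fun _ => ENNReal.ofReal_ne_zero_iff.1)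

theorem ae_withDensity_ofReal_div_pos {α : Type*} [MeasurableSpace α] {μ : Measure α}
    {p q : α → ℝ} (hp : Measurable p) (hq : ∀ᵐ x ∂μ, 0 < q x) :
    ∀ᵐ x ∂μ.withDensity (fun x => ENNReal.ofReal (p x)), 0 < p x / q x := by
  filter_upwards [ae_withDensity_ofReal_pos hp, withDensity_absolutelyContinuous μ _ hq]
    with x hpx hqx
  exact div_pos hpx hqx

namespace Measure

theorem map_prod_add_eq_conv_map {α β M : Type*} [MeasurableSpace α] [MeasurableSpace β]
    [AddMonoid M] [MeasurableSpace M] [MeasurableAdd₂ M] {μ : Measure α} {ν : Measure β}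
    [SFinite μ] [SFinite ν] {f : α → M} {g : β → M} (hf : Measurable f) (hg : Measurable g) :
    (μ.prod ν).map (fun x => f x.1 + g x.2) = μ.map f ∗ ν.map g := by
  rw [conv, map_prod_map μ ν hf hg, map_map measurable_add (hf.prodMap hg)]
  rfl

end Measure

end MeasureTheory

theorem plrv_of_product_pair_general {Ω Ω' : Type*} [MeasurableSpace Ω] [MeasurableSpace Ω']
    (ν : Measure Ω) (ν' : Measure Ω')
    (p q : Ω → ℝ) (p' q' : Ω' → ℝ)
    (hp : Measurable p) (hq : Measurable q) (hp' : Measurable p') (hq' : Measurable q')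
    (hqpos : ∀ᵐ t ∂ν, 0 < q t) (hq'pos : ∀ᵐ t ∂ν', 0 < q' t)
    (P : Measure Ω) (P' : Measure Ω')
    (hP : P = ν.withDensity (fun t => ENNReal.ofReal (p t)))
    (hP' : P' = ν'.withDensity (fun t => ENNReal.ofReal (p' t)))
    [IsProbabilityMeasure P] [IsProbabilityMeasure P'] :
    (∀ᵐ x ∂(P.prod P'),
        log ((p x.1 * p' x.2) / (q x.1 * q' x.2))
          = log (p x.1 / q x.1) + log (p' x.2 / q' x.2)) ∧
    (P.prod P').map (fun x => log (p x.1 / q x.1) + log (p' x.2 / q' x.2))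
      = Measure.conv (P.map (fun t => log (p t / q t)))
          (P'.map (fun t => log (p' t / q' t))) := by
  have hratio : ∀ᵐ t ∂P, 0 < p t / q t := hP ▸ ae_withDensity_ofReal_div_pos hp hqpos
  have hratio' : ∀ᵐ s ∂P', 0 < p' s / q' s := hP' ▸ ae_withDensity_ofReal_div_pos hp' hq'pos
  refine ⟨?_, Measure.map_prod_add_eq_conv_map (hp.div hq).log (hp'.div hq').log⟩
  filter_upwards [Measure.quasiMeasurePreserving_fst.ae hratio,
    Measure.quasiMeasurePreserving_snd.ae hratio'] with x hx hx'
  rw [← div_mul_div_comm, log_mul hx.ne' hx'.ne']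

/-- (i) The privacy loss function of a product pair decomposes as the sum of the
privacy loss functions, almost everywhere w.r.t. the product measure; and
(ii) the privacy loss random variable of the product pair is the convolution
(independent sum) of the two privacy loss random variables. -/
theorem plrv_of_product_pair {Ω Ω' : Type*} [MeasurableSpace Ω] [MeasurableSpace Ω']
    (ν : Measure Ω) (ν' : Measure Ω') [SigmaFinite ν] [SigmaFinite ν']
    (p q : Ω → ℝ) (p' q' : Ω' → ℝ)
    (hp : Measurable p) (hq : Measurable q) (hp' : Measurable p') (hq' : Measurable q')
    (hp0 : ∀ t, 0 ≤ p t) (hq0 : ∀ t, 0 ≤ q t) (hp'0 : ∀ t, 0 ≤ p' t) (hq'0 : ∀ t, 0 ≤ q' t)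
    (hqpos : ∀ᵐ t ∂ν, 0 < q t) (hq'pos : ∀ᵐ t ∂ν', 0 < q' t)
    (P Q : Measure Ω) (P' Q' : Measure Ω')
    (hP : P = ν.withDensity (fun t => ENNReal.ofReal (p t)))
    (hQ : Q = ν.withDensity (fun t => ENNReal.ofReal (q t)))
    (hP' : P' = ν'.withDensity (fun t => ENNReal.ofReal (p' t)))
    (hQ' : Q' = ν'.withDensity (fun t => ENNReal.ofReal (q' t)))
    [IsProbabilityMeasure P] [IsProbabilityMeasure Q]
    [IsProbabilityMeasure P'] [IsProbabilityMeasure Q'] :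
    (∀ᵐ x ∂(P.prod P'),
        log ((p x.1 * p' x.2) / (q x.1 * q' x.2))
          = log (p x.1 / q x.1) + log (p' x.2 / q' x.2)) ∧
    (P.prod P').map (fun x => log (p x.1 / q x.1) + log (p' x.2 / q' x.2))
      = Measure.conv (P.map (fun t => log (p t / q t)))
          (P'.map (fun t => log (p' t / q' t))) :=
  plrv_of_product_pair_general ν ν' p q p' q' hp hq hp' hq' hqpos hq'pos P P' hP hP'
end

section
/- Let x0, x1 ∈ ℝ and σ > 0, let P = N(x0, σ²) and Q = N(x1, σ²) with densities p = φ_{x0,σ} and q = φ_{x1,σ}, and set Δ = |x0 − x1|. Then the pushforward of P under the privacy loss function t ↦ log(p(t)/q(t)) equals the Gaussian measure N(Δ²/(2σ²), Δ²/σ²) on ℝ (interpreted as the Dirac measure at 0 when Δ = 0). That is, the privacy loss random variable of two equal-variance Gaussians is itself Gaussian with mean Δ²/(2σ²) and variance Δ²/σ². -/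
open MeasureTheory ProbabilityTheory Real

/-! The log-ratio of two Gaussian densities with a common variance is affine in `t`, since the
quadratic terms of the exponents cancel; and an affine image of a Gaussian is Gaussian. -/

open scoped NNReal in
lemma gaussianReal_map_mul_add (μ : ℝ) (v : ℝ≥0) (a b : ℝ) :
    (gaussianReal μ v).map (fun t => a * t + b) =
      gaussianReal (a * μ + b) (⟨a ^ 2, sq_nonneg a⟩ * v) := by
  have hcomp : (fun t : ℝ => a * t + b) = (· + b) ∘ (a * ·) := rfl
  rw [hcomp, ← Measure.map_map (measurable_add_const b) (measurable_const_mul a),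
    gaussianReal_map_const_mul, gaussianReal_map_add_const]
  rfl

lemma log_gaussian_density_div {σ : ℝ} (hσ : σ ≠ 0) (x0 x1 t : ℝ) :
    log (((σ * √(2 * π))⁻¹ * exp (-(t - x0) ^ 2 / (2 * σ ^ 2))) /
        ((σ * √(2 * π))⁻¹ * exp (-(t - x1) ^ 2 / (2 * σ ^ 2)))) =
      (x0 - x1) / σ ^ 2 * t + (x1 ^ 2 - x0 ^ 2) / (2 * σ ^ 2) := by
  have hnorm : (σ * √(2 * π))⁻¹ ≠ 0 := by positivity
  rw [mul_div_mul_left _ _ hnorm, ← exp_sub, log_exp]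
  field_simp
  ring

/-- The privacy loss random variable of two equal-variance Gaussians `N(x0, σ²)` and
`N(x1, σ²)` is Gaussian with mean `Δ²/(2σ²)` and variance `Δ²/σ²`, where `Δ = |x0 − x1|`
(the Dirac measure at `0` when `Δ = 0`, via `gaussianReal` with zero variance). -/
theorem plrv_gaussian (x0 x1 σ : ℝ) (hσ : 0 < σ) :
    (gaussianReal x0 ⟨σ ^ 2, sq_nonneg σ⟩).map
        (fun t => log
          (((σ * Real.sqrt (2 * π))⁻¹ * exp (-(t - x0) ^ 2 / (2 * σ ^ 2))) /
           ((σ * Real.sqrt (2 * π))⁻¹ * exp (-(t - x1) ^ 2 / (2 * σ ^ 2)))))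
      = gaussianReal (|x0 - x1| ^ 2 / (2 * σ ^ 2))
          ⟨|x0 - x1| ^ 2 / σ ^ 2, by positivity⟩ := by
  simp_rw [log_gaussian_density_div hσ.ne']
  refine (gaussianReal_map_mul_add x0 ⟨σ ^ 2, sq_nonneg σ⟩ _ _).trans ?_
  congr 1
  · rw [sq_abs]
    field_simp
    ring
  · ext
    change ((x0 - x1) / σ ^ 2) ^ 2 * σ ^ 2 = |x0 - x1| ^ 2 / σ ^ 2
    rw [sq_abs]
    field_simp
end

section
/- Let x0, x1 ∈ ℝ with x0 ≠ x1, let σ > 0 and set Δ = |x0 − x1|. Then for every ε ≥ 0, the hockey-stick divergence between the Gaussians N(x0, σ²) and N(x1, σ²) at threshold e^ε is given exactly by H_{e^ε}(N(x0, σ²)‖N(x1, σ²)) = Φ(−εσ/Δ + Δ/(2σ)) − e^ε · Φ(−εσ/Δ − Δ/(2σ)). -/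
/-!
For densities `p, q` the supremum of `P(E) − α Q(E)` is attained at `E = {α q ≤ p}`: adding
points where `p ≥ α q` and removing points where `p < α q` can only increase it
(Neyman–Pearson). For equal-variance Gaussians the log-likelihood ratio
`log (p/q) (t) = (x0 − x1)(2t − x0 − x1)/(2σ²)` is affine in `t`, so this set is a half-line.
Writing both Gaussians as the image of `N(0, 1)` under one affine map `z ↦ s z + m` with
`s (x0 − x1) = −σ|x0 − x1|` turns both probabilities of the half-line into values of `Φ`.
-/

open MeasureTheory ProbabilityTheory Real Set
open scoped NNReal ENNReal

section NeymanPearson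

variable {Ω : Type*} [MeasurableSpace Ω]

theorem hockeyStick_eq_of_separating {α : ℝ} {P Q : Measure Ω} [IsFiniteMeasure P]
    [IsFiniteMeasure Q] {S : Set Ω} (hS : MeasurableSet S)
    (h_in : ∀ A ⊆ S, MeasurableSet A → α * Q.real A ≤ P.real A)
    (h_out : ∀ A ⊆ Sᶜ, MeasurableSet A → P.real A ≤ α * Q.real A) :
    hockeyStick α P Q = P.real S - α * Q.real S := by
  have h_max (E : Set Ω) (hE : MeasurableSet E) :
      P.real E - α * Q.real E ≤ P.real S - α * Q.real S := by
    have h_gain := h_in (S \ E) sdiff_subset (hS.diff hE)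
    have h_loss := h_out (E \ S) (fun _ hx ↦ hx.2) (hE.diff hS)
    rw [← measureReal_inter_add_sdiff (μ := P) (s := E) hS,
      ← measureReal_inter_add_sdiff (μ := Q) (s := E) hS,
      ← measureReal_inter_add_sdiff (μ := P) (s := S) hE,
      ← measureReal_inter_add_sdiff (μ := Q) (s := S) hE, inter_comm S E]
    linarith
  refine le_antisymm (ciSup_le fun E ↦ h_max E E.2) ?_
  exact le_ciSup_of_le ⟨_, forall_mem_range.2 fun E ↦ h_max E E.2⟩ ⟨S, hS⟩ le_rfl

theorem mul_withDensity_real_le_mul {μ : Measure Ω} {f g : Ω → ℝ≥0∞}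
    [IsFiniteMeasure (μ.withDensity f)] {a b : ℝ} (ha : 0 ≤ a) (hb : 0 ≤ b) {A : Set Ω}
    (hA : MeasurableSet A) (h : ∀ x ∈ A, ENNReal.ofReal a * g x ≤ ENNReal.ofReal b * f x) :
    a * (μ.withDensity g).real A ≤ b * (μ.withDensity f).real A := by
  rw [measureReal_def, measureReal_def, ← ENNReal.toReal_ofReal ha, ← ENNReal.toReal_ofReal hb,
    ← ENNReal.toReal_mul, ← ENNReal.toReal_mul]
  refine ENNReal.toReal_mono (by finiteness) ?_
  rw [withDensity_apply _ hA, withDensity_apply _ hA,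
    ← lintegral_const_mul' _ f ENNReal.ofReal_ne_top]
  exact (lintegral_const_mul_le _ _).trans (setLIntegral_mono' hA h)

theorem hockeyStick_withDensity (μ : Measure Ω) {f g : Ω → ℝ≥0∞} (hf : Measurable f)
    (hg : Measurable g) [IsFiniteMeasure (μ.withDensity f)] [IsFiniteMeasure (μ.withDensity g)]
    {α : ℝ} (hα : 0 ≤ α) :
    hockeyStick α (μ.withDensity f) (μ.withDensity g)
      = (μ.withDensity f).real {x | ENNReal.ofReal α * g x ≤ f x}
        - α * (μ.withDensity g).real {x | ENNReal.ofReal α * g x ≤ f x} := by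
  refine hockeyStick_eq_of_separating (measurableSet_le (hg.const_mul _) hf) ?_ ?_
  · intro A hA hA_meas
    simpa using mul_withDensity_real_le_mul hα zero_le_one hA_meas
      fun x hx ↦ by simpa using hA hx
  · intro A hA hA_meas
    simpa using mul_withDensity_real_le_mul zero_le_one hα hA_meas
      fun x hx ↦ by
        have hx' : ¬ENNReal.ofReal α * g x ≤ f x := hA hx
        simpa using (not_le.1 hx').le

end NeymanPearson

theorem gaussianPDFReal_eq_exp_mul (x0 x1 : ℝ) (v : ℝ≥0) (t : ℝ) :
    gaussianPDFReal x0 v t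
      = exp ((x0 - x1) * (2 * t - x0 - x1) / (2 * v)) * gaussianPDFReal x1 v t := by
  rcases eq_or_ne v 0 with rfl | hv
  · simp
  have hv' : (v : ℝ) ≠ 0 := by exact_mod_cast hv
  rw [gaussianPDFReal, gaussianPDFReal, mul_left_comm, ← exp_add]
  congr 2
  field_simp
  ring

theorem setOf_ofReal_exp_mul_gaussianPDF_le (x0 x1 : ℝ) {v : ℝ≥0} (hv : v ≠ 0) (ε : ℝ) :
    {t | ENNReal.ofReal (exp ε) * gaussianPDF x1 v t ≤ gaussianPDF x0 v t}
      = {t | ε ≤ (x0 - x1) * (2 * t - x0 - x1) / (2 * v)} := by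
  ext t
  rw [mem_ofPred_eq, mem_ofPred_eq, gaussianPDF, gaussianPDF, gaussianPDFReal_eq_exp_mul x0 x1,
    ← ENNReal.ofReal_mul (exp_pos _).le,
    ENNReal.ofReal_le_ofReal_iff (mul_nonneg (exp_pos _).le (gaussianPDFReal_nonneg _ _ _)),
    mul_le_mul_iff_left₀ (gaussianPDFReal_pos _ _ _ hv), exp_le_exp]

theorem hockeyStick_gaussianReal (x0 x1 : ℝ) {v : ℝ≥0} (hv : v ≠ 0) {α : ℝ} (hα : 0 ≤ α) :
    hockeyStick α (gaussianReal x0 v) (gaussianReal x1 v)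
      = (gaussianReal x0 v).real {t | ENNReal.ofReal α * gaussianPDF x1 v t ≤ gaussianPDF x0 v t}
        - α * (gaussianReal x1 v).real
          {t | ENNReal.ofReal α * gaussianPDF x1 v t ≤ gaussianPDF x0 v t} := by
  have h0 := gaussianReal_of_var_ne_zero x0 hv
  have h1 := gaussianReal_of_var_ne_zero x1 hv
  have : IsFiniteMeasure (volume.withDensity (gaussianPDF x0 v)) := h0 ▸ inferInstance
  have : IsFiniteMeasure (volume.withDensity (gaussianPDF x1 v)) := h1 ▸ inferInstance
  rw [h0, h1]
  exact hockeyStick_withDensity volume (measurable_gaussianPDF _ _) (measurable_gaussianPDF _ _) hα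

theorem gaussianReal_eq_map_affine (m : ℝ) {v : ℝ≥0} {s : ℝ} (hs : s ^ 2 = v) :
    gaussianReal m v = (gaussianReal 0 1).map (fun z ↦ s * z + m) := by
  have : (fun z : ℝ ↦ s * z + m) = (· + m) ∘ (s * ·) := rfl
  rw [this, ← Measure.map_map (measurable_add_const _) (measurable_const_mul _),
    gaussianReal_map_const_mul, gaussianReal_map_add_const]
  congr
  · simp
  · ext; simp [hs]

theorem preimage_affine_setOf_le_eq_Iic {x0 x1 c r s : ℝ} (ε m : ℝ) (hc : 0 < c) (hr : 0 < r)
    (hs : s * (x0 - x1) = -r) :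
    (fun z ↦ s * z + m) ⁻¹' {t | ε ≤ (x0 - x1) * (2 * t - x0 - x1) / c}
      = Iic (((x0 - x1) * (2 * m - x0 - x1) - c * ε) / (2 * r)) := by
  ext z
  rw [mem_preimage, mem_ofPred_eq, mem_Iic, le_div_iff₀ hc, le_div_iff₀ (by positivity)]
  exact ⟨fun h ↦ by linear_combination h + 2 * z * hs,
    fun h ↦ by linear_combination h - 2 * z * hs⟩

/-- Exact formula for the hockey-stick divergence between equal-variance Gaussians at
threshold `e^ε`: `H_{e^ε}(N(x0,σ²)‖N(x1,σ²)) = Φ(−εσ/Δ + Δ/(2σ)) − e^ε·Φ(−εσ/Δ − Δ/(2σ))`,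
where `Δ = |x0 − x1|` and `Φ` is the standard normal CDF. -/
theorem hockeyStick_gaussian_formula (x0 x1 σ : ℝ) (hne : x0 ≠ x1) (hσ : 0 < σ) :
    ∀ ε : ℝ, 0 ≤ ε →
      hockeyStick (exp ε) (gaussianReal x0 ⟨σ ^ 2, sq_nonneg σ⟩)
          (gaussianReal x1 ⟨σ ^ 2, sq_nonneg σ⟩)
        = cdf (gaussianReal 0 1) (-(ε * σ) / |x0 - x1| + |x0 - x1| / (2 * σ))
          - exp ε * cdf (gaussianReal 0 1) (-(ε * σ) / |x0 - x1| - |x0 - x1| / (2 * σ)) := by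
  intro ε _
  obtain ⟨v, hv_def, hv_coe⟩ : ∃ v : ℝ≥0, v = ⟨σ ^ 2, sq_nonneg σ⟩ ∧ (v : ℝ) = σ ^ 2 :=
    ⟨_, rfl, rfl⟩
  rw [← hv_def]
  have hv : v ≠ 0 := by rw [← NNReal.coe_ne_zero, hv_coe]; positivity
  have hΔ : 0 < |x0 - x1| := abs_pos.2 (sub_ne_zero.2 hne)
  set s := -σ * (x0 - x1) / |x0 - x1|
  have hs2 : s ^ 2 = v := by
    simp only [s, hv_coe]
    field_simp
    rw [sq_abs]
  have hsd : s * (x0 - x1) = -(σ * |x0 - x1|) := by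
    simp only [s]
    field_simp
    rw [← sq_abs (x0 - x1)]
  rw [hockeyStick_gaussianReal x0 x1 hv (exp_pos ε).le,
    setOf_ofReal_exp_mul_gaussianPDF_le x0 x1 hv,
    gaussianReal_eq_map_affine x0 hs2, gaussianReal_eq_map_affine x1 hs2,
    map_measureReal_apply (by fun_prop) (measurableSet_le measurable_const (by fun_prop)),
    map_measureReal_apply (by fun_prop) (measurableSet_le measurable_const (by fun_prop)),
    preimage_affine_setOf_le_eq_Iic ε x0 (by positivity) (by positivity) hsd,
    preimage_affine_setOf_le_eq_Iic ε x1 (by positivity) (by positivity) hsd,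
    ← cdf_eq_real, ← cdf_eq_real, hv_coe]
  congr 3 <;> field_simp <;> rw [sq_abs] <;> ring
end

section
/- Let μ1, μ2 ≥ 0 and define, for i ∈ {1, 2, 3}, L_i(t) := log(φ_{μ_i,1}(t)/φ_{0,1}(t)) where μ3 := √(μ1² + μ2²) and φ_{m,1} is the density of N(m, 1). Then for every ε ∈ ℝ: ∫∫ max(1 − e^{ε − L_1(t_1) − L_2(t_2)}, 0) φ_{μ1,1}(t_1) φ_{μ2,1}(t_2) dt_1 dt_2 = ∫ max(1 − e^{ε − L_3(t)}, 0) φ_{μ3,1}(t) dt. That is, the composition of the privacy loss distributions of the Gaussian pairs (N(μ1,1), N(0,1)) and (N(μ2,1), N(0,1)) yields exactly the privacy loss distribution of the single Gaussian pair (N(√(μ1²+μ2²),1), N(0,1)). -/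
/-!
Under `N(μ, 1)` against `N(0, 1)` the privacy loss is affine, `L(t) = μ t - μ² / 2`, so both sides
are expectations of one function `F` of a linear statistic: `F (μ₁ X₁ + μ₂ X₂)` with independent
`X_i ∼ N(μ_i, 1)` on the left and `F (μ₃ Y)` with `Y ∼ N(μ₃, 1)` on the right. Both statistics are
distributed as `N(μ₁² + μ₂², μ₁² + μ₂²)`, because Gaussian laws are stable under scaling and
convolution.
-/

open MeasureTheory Real

/-- Density of the unit-variance Gaussian `N(m, 1)`. -/
noncomputable def gaussPDF (m t : ℝ) : ℝ :=
  (Real.sqrt (2 * π))⁻¹ * exp (-(t - m) ^ 2 / 2)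

open ProbabilityTheory

lemma gaussPDF_eq_gaussianPDFReal (m : ℝ) : gaussPDF m = gaussianPDFReal m 1 := by
  funext t
  simp [gaussPDF, gaussianPDFReal]

lemma integral_mul_gaussPDF (f : ℝ → ℝ) (m : ℝ) :
    ∫ t, f t * gaussPDF m t = ∫ t, f t ∂gaussianReal m 1 := by
  simp [integral_gaussianReal_eq_integral_smul one_ne_zero, gaussPDF_eq_gaussianPDFReal, mul_comm]

lemma log_gaussPDF_div_gaussPDF_zero (m t : ℝ) :
    log (gaussPDF m t / gaussPDF 0 t) = m * t - m ^ 2 / 2 := by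
  unfold gaussPDF
  rw [mul_div_mul_left _ _ (by positivity), ← exp_sub, log_exp]
  ring

lemma gaussianReal_prod_map_mul_add_mul (a b : ℝ) :
    ((gaussianReal a 1).prod (gaussianReal b 1)).map (fun p => a * p.1 + b * p.2)
      = (gaussianReal √(a ^ 2 + b ^ 2) 1).map (√(a ^ 2 + b ^ 2) * ·) := by
  have hsq : √(a ^ 2 + b ^ 2) ^ 2 = a ^ 2 + b ^ 2 := sq_sqrt (by positivity)
  have hcomp : (fun p : ℝ × ℝ => a * p.1 + b * p.2)
      = (fun p : ℝ × ℝ => p.1 + p.2) ∘ Prod.map (a * ·) (b * ·) := rfl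
  rw [hcomp, ← Measure.map_map (by fun_prop) (by fun_prop),
    ← Measure.map_prod_map _ _ (by fun_prop) (by fun_prop)]
  change (gaussianReal a 1).map (a * ·) ∗ (gaussianReal b 1).map (b * ·) = _
  simp only [gaussianReal_map_const_mul, gaussianReal_conv_gaussianReal, mul_one]
  congr 1
  · rw [← sq, ← sq, ← sq, hsq]
  · ext
    simp [hsq]

theorem integral_integral_gaussianReal_comp_mul_add_mul {E : Type*} [NormedAddCommGroup E]
    [NormedSpace ℝ E] (a b : ℝ) {F : ℝ → E}
    (hF : Integrable F ((gaussianReal √(a ^ 2 + b ^ 2) 1).map (√(a ^ 2 + b ^ 2) * ·))) :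
    ∫ x, ∫ y, F (a * x + b * y) ∂gaussianReal b 1 ∂gaussianReal a 1
      = ∫ t, F (√(a ^ 2 + b ^ 2) * t) ∂gaussianReal √(a ^ 2 + b ^ 2) 1 := by
  have hF' := hF
  rw [← gaussianReal_prod_map_mul_add_mul] at hF'
  calc ∫ x, ∫ y, F (a * x + b * y) ∂gaussianReal b 1 ∂gaussianReal a 1
      = ∫ p, F (a * p.1 + b * p.2) ∂(gaussianReal a 1).prod (gaussianReal b 1) :=
        (integral_prod _ ((integrable_map_measure hF'.1 (by fun_prop)).mp hF')).symm
    _ = ∫ t, F (√(a ^ 2 + b ^ 2) * t) ∂gaussianReal √(a ^ 2 + b ^ 2) 1 := by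
        rw [← integral_map (by fun_prop) hF'.1, gaussianReal_prod_map_mul_add_mul,
          integral_map (by fun_prop) hF.1]

theorem gaussian_pld_composition_general (μ1 μ2 : ℝ) :
    ∀ ε : ℝ,
      (∫ t1 : ℝ, (∫ t2 : ℝ,
          max (1 - exp (ε - log (gaussPDF μ1 t1 / gaussPDF 0 t1)
            - log (gaussPDF μ2 t2 / gaussPDF 0 t2))) 0 * gaussPDF μ2 t2) * gaussPDF μ1 t1)
        = ∫ t : ℝ,
            max (1 - exp (ε - log (gaussPDF (Real.sqrt (μ1 ^ 2 + μ2 ^ 2)) t / gaussPDF 0 t))) 0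
              * gaussPDF (Real.sqrt (μ1 ^ 2 + μ2 ^ 2)) t := by
  intro ε
  set F : ℝ → ℝ := fun s => max (1 - exp (ε + (μ1 ^ 2 + μ2 ^ 2) / 2 - s)) 0
  have hsq : √(μ1 ^ 2 + μ2 ^ 2) ^ 2 = μ1 ^ 2 + μ2 ^ 2 := sq_sqrt (by positivity)
  have hFint : Integrable F
      ((gaussianReal √(μ1 ^ 2 + μ2 ^ 2) 1).map (√(μ1 ^ 2 + μ2 ^ 2) * ·)) := by
    refine Integrable.of_bound (by fun_prop) 1 (ae_of_all _ fun s => ?_)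
    rw [norm_of_nonneg (le_max_right _ _)]
    exact max_le (by linarith [exp_pos (ε + (μ1 ^ 2 + μ2 ^ 2) / 2 - s)]) zero_le_one
  simp only [log_gaussPDF_div_gaussPDF_zero, integral_mul_gaussPDF]
  convert integral_integral_gaussianReal_comp_mul_add_mul μ1 μ2 hFint using 5 with t1 t2 t
  · congr 3; ring
  · rw [hsq]; congr 1; ring

/-- The composition of the privacy loss distributions of the Gaussian pairs
`(N(μ1,1), N(0,1))` and `(N(μ2,1), N(0,1))` yields exactly the privacy loss distribution of
the single Gaussian pair `(N(√(μ1²+μ2²),1), N(0,1))`. -/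
theorem gaussian_pld_composition (μ1 μ2 : ℝ) (h1 : 0 ≤ μ1) (h2 : 0 ≤ μ2) :
    ∀ ε : ℝ,
      (∫ t1 : ℝ, (∫ t2 : ℝ,
          max (1 - exp (ε - log (gaussPDF μ1 t1 / gaussPDF 0 t1)
            - log (gaussPDF μ2 t2 / gaussPDF 0 t2))) 0 * gaussPDF μ2 t2) * gaussPDF μ1 t1)
        = ∫ t : ℝ,
            max (1 - exp (ε - log (gaussPDF (Real.sqrt (μ1 ^ 2 + μ2 ^ 2)) t / gaussPDF 0 t))) 0
              * gaussPDF (Real.sqrt (μ1 ^ 2 + μ2 ^ 2)) t :=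
  gaussian_pld_composition_general μ1 μ2
end

section
/- If 0 ≤ μ ≤ μ', then for every real α > 0: H_α(N(μ, 1)‖N(0, 1)) ≤ H_α(N(μ', 1)‖N(0, 1)); i.e. the hockey-stick divergence between unit-variance Gaussians is nondecreasing in the distance between their means. -/
open MeasureTheory ProbabilityTheory Real

/-!
The likelihood ratio of `N(m, v)` against `N(m₀, v)` is `x ↦ exp (((m - m₀) x - (m² - m₀²) / 2) / v)`,
nondecreasing when `m₀ ≤ m`. Hence the Neyman–Pearson set `S = {x | α q(x) ≤ p_μ(x)}`, on which
`P(E) − α·Q(E)` is maximised for `P = N(μ, 1)`, `Q = N(0, 1)`, is an upper set of `ℝ`. Shifting the mean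
of `P` up to `μ'` only increases the mass of an upper set while `Q` stays fixed, so
`H_α(N(μ', 1)‖Q) ≥ N(μ', 1)(S) − α·Q(S) ≥ H_α(N(μ, 1)‖Q)`.
-/

section HockeyStick

variable {Ω : Type*} [MeasurableSpace Ω]

lemma le_hockeyStick (α : ℝ) (P Q : Measure Ω) [IsFiniteMeasure P] [IsFiniteMeasure Q]
    {E : Set Ω} (hE : MeasurableSet E) :
    (P E).toReal - α * (Q E).toReal ≤ hockeyStick α P Q := by
  refine le_ciSup (f := fun E : {E : Set Ω // MeasurableSet E} => (P E).toReal - α * (Q E).toReal)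
    ⟨(P Set.univ).toReal + |α| * (Q Set.univ).toReal, ?_⟩ ⟨E, hE⟩
  rintro _ ⟨F, rfl⟩
  have hP : (P F).toReal ≤ (P Set.univ).toReal :=
    ENNReal.toReal_mono (measure_ne_top _ _) (measure_mono (Set.subset_univ _))
  have hQ : (Q F).toReal ≤ (Q Set.univ).toReal :=
    ENNReal.toReal_mono (measure_ne_top _ _) (measure_mono (Set.subset_univ _))
  have hαQ : -(α * (Q F).toReal) ≤ |α| * (Q Set.univ).toReal :=
    calc -(α * (Q F).toReal) ≤ |α * (Q F).toReal| := neg_le_abs _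
      _ = |α| * (Q F).toReal := by rw [abs_mul, abs_of_nonneg ENNReal.toReal_nonneg]
      _ ≤ |α| * (Q Set.univ).toReal := by gcongr
  dsimp only
  linarith

lemma hockeyStick_le {α c : ℝ} {P Q : Measure Ω}
    (h : ∀ E, MeasurableSet E → (P E).toReal - α * (Q E).toReal ≤ c) :
    hockeyStick α P Q ≤ c :=
  haveI : Nonempty {E : Set Ω // MeasurableSet E} := ⟨⟨∅, .empty⟩⟩
  ciSup_le fun E => h E.1 E.2

end HockeyStick

lemma map_add_const_apply_mono_of_isUpperSet {G : Type*} [MeasurableSpace G] [Add G] [Preorder G]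
    [AddLeftMono G] [MeasurableAdd G] (ν : Measure G) {S : Set G} (hS : IsUpperSet S)
    (hSm : MeasurableSet S) {a b : G} (hab : a ≤ b) :
    ν.map (· + a) S ≤ ν.map (· + b) S := by
  rw [Measure.map_apply (measurable_add_const a) hSm, Measure.map_apply (measurable_add_const b) hSm]
  exact measure_mono fun x hx => hS (add_le_add_right hab x) hx

lemma gaussianReal_apply_mono_of_isUpperSet (v : NNReal) {S : Set ℝ} (hS : IsUpperSet S)
    (hSm : MeasurableSet S) {m m' : ℝ} (hm : m ≤ m') :
    gaussianReal m v S ≤ gaussianReal m' v S := by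
  simpa [gaussianReal_map_add_const] using
    map_add_const_apply_mono_of_isUpperSet (gaussianReal 0 v) hS hSm hm

lemma gaussianPDFReal_eq_mul_exp (m m₀ : ℝ) (v : NNReal) (x : ℝ) :
    gaussianPDFReal m v x
      = gaussianPDFReal m₀ v x * rexp (((m - m₀) * x - (m ^ 2 - m₀ ^ 2) / 2) / v) := by
  rcases eq_or_ne v 0 with rfl | hv
  · simp
  rw [gaussianPDFReal, gaussianPDFReal, mul_assoc _ (rexp _), ← exp_add]
  congr 2
  field_simp
  ring

lemma isUpperSet_setOf_mul_gaussianPDFReal_le (α : ℝ) {m₀ m : ℝ} (hm : m₀ ≤ m) {v : NNReal}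
    (hv : v ≠ 0) :
    IsUpperSet {x | α * gaussianPDFReal m₀ v x ≤ gaussianPDFReal m v x} := by
  intro x y hxy hx
  simp only [Set.mem_ofPred_eq, gaussianPDFReal_eq_mul_exp m m₀ v] at hx ⊢
  rw [mul_comm α, mul_le_mul_iff_right₀ (gaussianPDFReal_pos _ _ _ hv)] at hx ⊢
  refine hx.trans (exp_le_exp.mpr ?_)
  have : 0 ≤ m - m₀ := sub_nonneg.mpr hm
  gcongr

lemma toReal_gaussianReal_sub_mul_eq_setIntegral (m m₀ α : ℝ) {v : NNReal} (hv : v ≠ 0)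
    (E : Set ℝ) :
    (gaussianReal m v E).toReal - α * (gaussianReal m₀ v E).toReal
      = ∫ x in E, (gaussianPDFReal m v x - α * gaussianPDFReal m₀ v x) := by
  rw [integral_sub (integrable_gaussianPDFReal m v).integrableOn
      ((integrable_gaussianPDFReal m₀ v).integrableOn.const_mul α), integral_const_mul,
    gaussianReal_apply_eq_integral _ hv, gaussianReal_apply_eq_integral _ hv,
    ENNReal.toReal_ofReal (integral_nonneg fun _ => gaussianPDFReal_nonneg _ _ _),
    ENNReal.toReal_ofReal (integral_nonneg fun _ => gaussianPDFReal_nonneg _ _ _)]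

lemma toReal_gaussianReal_sub_mul_le_neymanPearson (m m₀ α : ℝ) {v : NNReal} (hv : v ≠ 0)
    {E : Set ℝ} (hE : MeasurableSet E) :
    (gaussianReal m v E).toReal - α * (gaussianReal m₀ v E).toReal
      ≤ (gaussianReal m v {x | α * gaussianPDFReal m₀ v x ≤ gaussianPDFReal m v x}).toReal
        - α * (gaussianReal m₀ v {x | α * gaussianPDFReal m₀ v x ≤ gaussianPDFReal m v x}).toReal := by
  have hS : {x | α * gaussianPDFReal m₀ v x ≤ gaussianPDFReal m v x}
      = {x | 0 ≤ gaussianPDFReal m v x - α * gaussianPDFReal m₀ v x} := by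
    simp only [sub_nonneg]
  rw [toReal_gaussianReal_sub_mul_eq_setIntegral m m₀ α hv,
    toReal_gaussianReal_sub_mul_eq_setIntegral m m₀ α hv, hS]
  exact setIntegral_le_nonneg hE
    ((stronglyMeasurable_gaussianPDFReal m v).sub
      ((stronglyMeasurable_gaussianPDFReal m₀ v).const_mul α))
    ((integrable_gaussianPDFReal m v).sub ((integrable_gaussianPDFReal m₀ v).const_mul α))

/-- The hockey-stick divergence between unit-variance Gaussians is nondecreasing in the
distance between their means. -/
theorem hockeyStick_gaussian_mono (μ μ' : ℝ) (hμ : 0 ≤ μ) (hμμ' : μ ≤ μ') :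
    ∀ α : ℝ, 0 < α →
      hockeyStick α (gaussianReal μ 1) (gaussianReal 0 1)
        ≤ hockeyStick α (gaussianReal μ' 1) (gaussianReal 0 1) := by
  intro α _
  set S := {x | α * gaussianPDFReal 0 1 x ≤ gaussianPDFReal μ 1 x}
  have hSm : MeasurableSet S :=
    measurableSet_le ((measurable_gaussianPDFReal 0 1).const_mul α) (measurable_gaussianPDFReal μ 1)
  have hSμ : gaussianReal μ 1 S ≤ gaussianReal μ' 1 S :=
    gaussianReal_apply_mono_of_isUpperSet 1
      (isUpperSet_setOf_mul_gaussianPDFReal_le α hμ one_ne_zero) hSm hμμ'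
  refine hockeyStick_le fun E hE => ?_
  calc (gaussianReal μ 1 E).toReal - α * (gaussianReal 0 1 E).toReal
      ≤ (gaussianReal μ 1 S).toReal - α * (gaussianReal 0 1 S).toReal :=
        toReal_gaussianReal_sub_mul_le_neymanPearson μ 0 α one_ne_zero hE
    _ ≤ (gaussianReal μ' 1 S).toReal - α * (gaussianReal 0 1 S).toReal :=
        sub_le_sub_right (ENNReal.toReal_mono (measure_ne_top _ _) hSμ) _
    _ ≤ hockeyStick α (gaussianReal μ' 1) (gaussianReal 0 1) := le_hockeyStick α _ _ hSm
end

section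
/- For every k ≥ 1, every vector (μ_1, …, μ_k) of nonnegative reals, and every real α > 0, the hockey-stick divergence between the product Gaussian measures satisfies H_α(⊗_{i=1}^{k} N(μ_i, 1)‖⊗_{i=1}^{k} N(0, 1)) = H_α(N(√(μ_1² + ⋯ + μ_k²), 1)‖N(0, 1)); i.e. the (non-adaptive) composition of k Gaussian mechanisms with parameters μ_1, …, μ_k is exactly as distinguishable as a single unit-variance Gaussian pair with means √(Σ μ_i²) apart. -/
open MeasureTheory ProbabilityTheory Real

/-! If `P = r • Q`, then `H_α(P‖Q) = ∫ (r - α)⁺ dQ` (Neyman–Pearson). The likelihood ratio of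
`⊗ N(μᵢ, 1)` to `⊗ N(0, 1)` is `x ↦ exp (⟪μ, x⟫ - s² / 2)` with `s = ‖μ‖`, and that of `N(s, 1)` to
`N(0, 1)` is `y ↦ exp (s y - s² / 2)`. So both divergences are integrals of the same function `g`,
evaluated at `⟪μ, x⟫` under `⊗ N(0, 1)` and at `s y` under `N(0, 1)`, and these two statistics have
the same law `N(0, s²)`. -/

open scoped ENNReal NNReal

section NeymanPearson

variable {Ω : Type*} [MeasurableSpace Ω]

lemma toReal_withDensity_ofReal_apply (Q : Measure Ω) {r : Ω → ℝ} (hr0 : 0 ≤ r)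
    (hint : Integrable r Q) {E : Set Ω} (hE : MeasurableSet E) :
    (Q.withDensity (fun x ↦ ENNReal.ofReal (r x)) E).toReal = ∫ x in E, r x ∂Q := by
  rw [withDensity_apply _ hE,
    ← ofReal_integral_eq_lintegral_ofReal hint.restrict (ae_of_all _ hr0),
    ENNReal.toReal_ofReal (setIntegral_nonneg hE fun x _ ↦ hr0 x)]

lemma integrable_of_isFiniteMeasure_withDensity_ofReal {Q : Measure Ω} {r : Ω → ℝ}
    (hr : Measurable r) (hr0 : 0 ≤ r)
    [IsFiniteMeasure (Q.withDensity fun x ↦ ENNReal.ofReal (r x))] : Integrable r Q := by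
  refine ⟨hr.aestronglyMeasurable, (hasFiniteIntegral_iff_ofReal (ae_of_all _ hr0)).2 ?_⟩
  rw [← setLIntegral_univ, ← withDensity_apply _ .univ]
  exact measure_lt_top _ _

theorem hockeyStick_eq_integral_of_eq_withDensity {P Q : Measure Ω} [IsFiniteMeasure P]
    [IsFiniteMeasure Q] {r : Ω → ℝ} (hr : Measurable r) (hr0 : 0 ≤ r)
    (hPQ : P = Q.withDensity fun x ↦ ENNReal.ofReal (r x)) (α : ℝ) :
    hockeyStick α P Q = ∫ x, max (r x - α) 0 ∂Q := by
  subst hPQ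
  have hint : Integrable r Q := integrable_of_isFiniteMeasure_withDensity_ofReal hr hr0
  have hmax : Integrable (fun x ↦ max (r x - α) 0) Q := (hint.sub (integrable_const α)).pos_part
  have value (E : Set Ω) (hE : MeasurableSet E) :
      ((Q.withDensity fun x ↦ ENNReal.ofReal (r x)) E).toReal - α * (Q E).toReal
        = ∫ x, E.indicator (fun x ↦ r x - α) x ∂Q := by
    rw [integral_indicator hE, integral_sub hint.restrict (integrable_const α), setIntegral_const,
      toReal_withDensity_ofReal_apply Q hr0 hint hE, smul_eq_mul, mul_comm, measureReal_def]
  have le_integral (E : {E : Set Ω // MeasurableSet E}) :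
      ((Q.withDensity fun x ↦ ENNReal.ofReal (r x)) E).toReal - α * (Q E).toReal
        ≤ ∫ x, max (r x - α) 0 ∂Q := by
    rw [value E E.2]
    refine integral_mono ((hint.sub (integrable_const α)).indicator E.2) hmax fun x ↦ ?_
    by_cases hx : x ∈ E.1 <;> simp [hx]
  have hE : MeasurableSet {x | α < r x} := measurableSet_lt measurable_const hr
  -- Neyman–Pearson: the likelihood-ratio set `{α < r}` attains the supremum.
  refine le_antisymm (ciSup_le le_integral)
    (le_ciSup_of_le ⟨_, Set.forall_mem_range.2 le_integral⟩ ⟨_, hE⟩ ?_)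
  rw [value _ hE]
  refine (integral_congr_ae (ae_of_all _ fun x ↦ ?_)).le
  by_cases hx : α < r x
  · simp [hx, hx.le]
  · simp [hx, not_lt.1 hx]

end NeymanPearson

lemma gaussianReal_eq_withDensity_exp (m : ℝ) {v : ℝ≥0} (hv : v ≠ 0) :
    gaussianReal m v
      = (gaussianReal 0 v).withDensity fun x ↦ ENNReal.ofReal (exp ((m * x - m ^ 2 / 2) / v)) := by
  rw [gaussianReal_of_var_ne_zero m hv, gaussianReal_of_var_ne_zero 0 hv,
    ← withDensity_mul _ (measurable_gaussianPDF 0 v) (by fun_prop)]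
  congr with x
  rw [Pi.mul_apply, gaussianPDF, gaussianPDF, ← ENNReal.ofReal_mul (gaussianPDFReal_nonneg 0 v x),
    gaussianPDFReal, gaussianPDFReal]
  conv_rhs => rw [mul_assoc, ← exp_add]
  congr 3
  field_simp
  ring

lemma MeasureTheory.Measure.pi_eq_withDensity_prod {ι : Type*} [Fintype ι] {X : ι → Type*}
    [∀ i, MeasurableSpace (X i)] {μ ν : (i : ι) → Measure (X i)} [∀ i, IsProbabilityMeasure (μ i)]
    [∀ i, SigmaFinite (ν i)] {f : (i : ι) → X i → ℝ≥0∞} (hf : ∀ i, Measurable (f i))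
    (hν : ∀ i, ν i = (μ i).withDensity (f i)) :
    Measure.pi ν = (Measure.pi μ).withDensity fun x ↦ ∏ i, f i (x i) := by
  refine Measure.pi_eq fun s hs ↦ ?_
  have hbox : (Set.univ.pi s).indicator (fun x ↦ ∏ i, f i (x i))
      = fun x ↦ ∏ i, (s i).indicator (f i) (x i) := by
    ext x
    by_cases hx : x ∈ Set.univ.pi s
    · simp_all
    · obtain ⟨i, hi⟩ : ∃ i, x i ∉ s i := by simpa [Set.mem_univ_pi] using hx
      rw [Set.indicator_of_notMem hx, eq_comm]
      exact Finset.prod_eq_zero (Finset.mem_univ i) (Set.indicator_of_notMem hi _)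
  rw [withDensity_apply _ (.univ_pi hs), ← lintegral_indicator (.univ_pi hs), hbox,
    lintegral_prod_eq_prod_lintegral_of_indepFun _ _
      (iIndepFun_pi fun i ↦ ((hf i).indicator (hs i)).aemeasurable)
      fun i ↦ ((hf i).indicator (hs i)).comp (measurable_pi_apply i)]
  refine Finset.prod_congr rfl fun i _ ↦ ?_
  rw [hν i, withDensity_apply _ (hs i), ← lintegral_indicator (hs i),
    ← (measurePreserving_eval μ i).lintegral_comp ((hf i).indicator (hs i))]

lemma pi_gaussianReal_eq_withDensity {ι : Type*} [Fintype ι] (m : ι → ℝ) :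
    Measure.pi (fun i ↦ gaussianReal (m i) 1)
      = (Measure.pi fun _ : ι ↦ gaussianReal 0 1).withDensity
          fun x ↦ ENNReal.ofReal (exp (∑ i, m i * x i - (∑ i, m i ^ 2) / 2)) := by
  rw [Measure.pi_eq_withDensity_prod (by fun_prop)
    fun i ↦ gaussianReal_eq_withDensity_exp (m i) one_ne_zero]
  congr with x
  rw [← ENNReal.ofReal_prod_of_nonneg fun i _ ↦ (exp_pos _).le, ← exp_sum]
  simp only [NNReal.coe_one, div_one, Finset.sum_sub_distrib, Finset.sum_div]

lemma map_pi_gaussianReal_sum_mul {ι : Type*} [Fintype ι] (u : ι → ℝ) :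
    (Measure.pi fun _ : ι ↦ gaussianReal 0 1).map (fun x ↦ ∑ i, u i * x i)
      = gaussianReal 0 (∑ i, u i ^ 2).toNNReal := by
  have h : (fun x : ι → ℝ ↦ ∑ i, u i * x i)
      = innerSL ℝ (WithLp.toLp 2 u : EuclideanSpace ℝ ι) ∘ WithLp.toLp 2 := by
    ext x; simp [PiLp.inner_apply, mul_comm]
  rw [h, ← Measure.map_map (by fun_prop) (by fun_prop), map_pi_eq_stdGaussian,
    IsGaussian.map_eq_gaussianReal, integral_strongDual_stdGaussian, variance_dual_stdGaussian,
    innerSL_apply_norm, EuclideanSpace.norm_eq, sq_sqrt (by positivity)]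
  simp

theorem hockeyStick_gaussian_product_general (k : ℕ) (μ : Fin k → ℝ) :
    ∀ α : ℝ, 0 < α →
      hockeyStick α (Measure.pi (fun i : Fin k => gaussianReal (μ i) 1))
          (Measure.pi (fun _ : Fin k => gaussianReal 0 1))
        = hockeyStick α (gaussianReal (Real.sqrt (∑ i, μ i ^ 2)) 1) (gaussianReal 0 1) := by
  intro α _
  set s := √(∑ i, μ i ^ 2)
  have hs : ∑ i, μ i ^ 2 = s ^ 2 := (sq_sqrt (by positivity)).symm
  rw [hockeyStick_eq_integral_of_eq_withDensity (by fun_prop) (fun _ ↦ (exp_pos _).le)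
      (pi_gaussianReal_eq_withDensity μ),
    hockeyStick_eq_integral_of_eq_withDensity (by fun_prop) (fun _ ↦ (exp_pos _).le)
      (gaussianReal_eq_withDensity_exp s one_ne_zero), hs]
  simp only [NNReal.coe_one, div_one]
  have hmap : (Measure.pi fun _ : Fin k ↦ gaussianReal 0 1).map (fun x ↦ ∑ i, μ i * x i)
      = (gaussianReal 0 1).map (s * ·) := by
    rw [map_pi_gaussianReal_sum_mul, gaussianReal_map_const_mul, hs, mul_zero, mul_one]
    congr
    exact Real.toNNReal_of_nonneg (sq_nonneg s)
  let g (t : ℝ) := max (exp (t - s ^ 2 / 2) - α) 0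
  calc ∫ x, g (∑ i, μ i * x i) ∂(Measure.pi fun _ ↦ gaussianReal 0 1)
      = ∫ t, g t ∂(Measure.pi fun _ ↦ gaussianReal 0 1).map (fun x ↦ ∑ i, μ i * x i) :=
        (integral_map (Measurable.aemeasurable (by fun_prop)) (by fun_prop)).symm
    _ = ∫ y, g (s * y) ∂gaussianReal 0 1 := by
        rw [hmap, integral_map (by fun_prop) (by fun_prop)]

/-- The (non-adaptive) composition of `k` Gaussian mechanisms with parameters `μ_1, …, μ_k`
is exactly as distinguishable as a single unit-variance Gaussian pair with means
`√(Σ μ_i²)` apart. -/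
theorem hockeyStick_gaussian_product (k : ℕ) (hk : 1 ≤ k) (μ : Fin k → ℝ)
    (hμ : ∀ i, 0 ≤ μ i) :
    ∀ α : ℝ, 0 < α →
      hockeyStick α (Measure.pi (fun i : Fin k => gaussianReal (μ i) 1))
          (Measure.pi (fun _ : Fin k => gaussianReal 0 1))
        = hockeyStick α (gaussianReal (Real.sqrt (∑ i, μ i ^ 2)) 1) (gaussianReal 0 1) :=
  hockeyStick_gaussian_product_general k μ
end
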